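/- arXiv:2310.09954 — 2 statements merged into one kernel-verified Lean document; each statement's English description precedes it below -/
import Mathlib

section
/- Fix an integer r ≥ 2 and let g be an integer with g ≥ 4(r+1)^{5/2} + (r+1)² + 2(r+1)^{3/2}. Then for every integer s with r < s and s(s+1) ≤ g (equivalently d_max(g,s) ≤ g−1), one has κ(g,r,d_max(g,r)) > κ(g,s,d_max(g,s)). -/
noncomputable section

/-- The Brill--Noether number `ρ(g,r,d) = g - (r+1)(g-d+r)`. -/
def rho (g r d : ℤ) : ℤ := g - (r + 1) * (g - d + r)

/-- Pflueger's Brill--Noether number `ρ_k(g,r,d)`, the maximum of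
`ρ(g,r-ℓ,d) - ℓk` over integers `0 ≤ ℓ ≤ min r (g-d+r-1)`. -/
def rhoK (g r d k : ℤ) : ℤ :=
  sSup ((fun ℓ : ℤ => rho g (r - ℓ) d - ℓ * k) '' Set.Icc 0 (min r (g - d + r - 1)))

/-- `κ(g,r,d)`: the greatest integer `k ≥ 1` such that `ρ_k(g,r,d) ≥ 0`. -/
def kappa (g r d : ℤ) : ℤ := sSup {k : ℤ | 1 ≤ k ∧ 0 ≤ rhoK g r d k}

/-- `d_max(g,r) = r + ⌈gr/(r+1)⌉ - 1`, the largest `d` with `ρ(g,r,d) < 0`. -/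
def dmax (g r : ℤ) : ℤ := r + ⌈((g : ℚ) * r) / ((r : ℚ) + 1)⌉ - 1
/-!
Write `g = (r + 1) q + e` with `0 ≤ e ≤ r`. At `d = d_max(g, r)` one has `g - d + r = q + 1`, and
`ρ(g, r - ℓ, d) - ℓ k = e - (r + 1) + ℓ (q + r + 2 - k - ℓ)`. So `ρ_k < 0` as soon as `k > q + r`,
giving `κ ≤ q + r`, while `ℓ = b := ⌈√(r + 1)⌉` gives `κ ≥ q + r + 2 - 2b`. Comparing `r` with
`s = r + t`, it remains to see `⌊g / (r + 1)⌋ - ⌊g / (s + 1)⌋ ≥ t + 2b`, i.e.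
`(t + 2b)(r + 1)(s + 1) ≤ g t`: for `t ≤ 2b (r + 1)` this follows from the lower bound on `g`,
which is `≥ (2b + 1)(r + 1)(r + 2)`, and for larger `t` from `s (s + 1) ≤ g`.
-/

lemma dmax_eq {g r : ℤ} (hr : 0 ≤ r) : dmax g r = g + r - g / (r + 1) - 1 := by
  have hR : (0 : ℚ) < r + 1 := by exact_mod_cast (show (0 : ℤ) < r + 1 by omega)
  have hlo : g / (r + 1) * (r + 1) ≤ g := Int.ediv_mul_le g (by omega)
  have hhi : g < (g / (r + 1) + 1) * (r + 1) := Int.lt_ediv_add_one_mul_self g (by omega)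
  have hceil : ⌈(g : ℚ) * r / (r + 1)⌉ = g - g / (r + 1) := by
    rw [Int.ceil_eq_iff, lt_div_iff₀ hR, div_le_iff₀ hR]
    push_cast
    constructor
    · have : (g : ℚ) < (g / (r + 1) + 1 : ℤ) * (r + 1) := by exact_mod_cast hhi
      push_cast at this
      linarith
    · have : ((g / (r + 1) : ℤ) : ℚ) * (r + 1) ≤ g := by exact_mod_cast hlo
      linarith
  rw [dmax, hceil]
  ring

lemma le_rhoK {g r d k ℓ : ℤ} (hℓ : ℓ ∈ Set.Icc 0 (min r (g - d + r - 1))) :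
    rho g (r - ℓ) d - ℓ * k ≤ rhoK g r d k :=
  le_csSup ((Set.finite_Icc _ _).image _).bddAbove (Set.mem_image_of_mem _ hℓ)

lemma exists_rhoK_eq {g r d : ℤ} (k : ℤ) (h : 0 ≤ min r (g - d + r - 1)) :
    ∃ ℓ ∈ Set.Icc 0 (min r (g - d + r - 1)), rho g (r - ℓ) d - ℓ * k = rhoK g r d k :=
  ((Set.nonempty_Icc.2 h).image _).csSup_mem ((Set.finite_Icc _ _).image _)

section dmax

variable {g r : ℤ}

lemma sub_dmax_add_sub_one (hr : 0 ≤ r) : g - dmax g r + r - 1 = g / (r + 1) := by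
  rw [dmax_eq hr]
  ring

lemma rho_dmax_sub_mul (hr : 0 ≤ r) (ℓ k : ℤ) :
    rho g (r - ℓ) (dmax g r) - ℓ * k =
      g % (r + 1) - (r + 1) + ℓ * (g / (r + 1) + r + 2 - k - ℓ) := by
  rw [dmax_eq hr, rho]
  linear_combination -Int.emod_add_mul_ediv g (r + 1)

lemma rhoK_dmax_neg (hr : 0 ≤ r) (hg : 0 ≤ g) {k : ℤ} (hk : g / (r + 1) + r < k) :
    rhoK g r (dmax g r) k < 0 := by
  have hq : 0 ≤ g / (r + 1) := Int.ediv_nonneg hg (by omega)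
  obtain ⟨ℓ, ⟨hℓ, -⟩, hℓk⟩ :=
    exists_rhoK_eq (g := g) k (by rw [sub_dmax_add_sub_one hr]; omega)
  rw [← hℓk, rho_dmax_sub_mul hr]
  have := Int.emod_lt_of_pos g (show 0 < r + 1 by omega)
  nlinarith [mul_nonneg hℓ (show 0 ≤ k - g / (r + 1) - r - 1 by omega), Int.le_self_sq ℓ]

lemma rhoK_dmax_nonneg (hr : 0 ≤ r) {k ℓ : ℤ} (hℓ : 0 ≤ ℓ) (hℓr : ℓ ≤ r) (hℓq : ℓ ≤ g / (r + 1))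
    (hk : r + 1 ≤ ℓ * (g / (r + 1) + r + 2 - k - ℓ)) : 0 ≤ rhoK g r (dmax g r) k := by
  refine le_trans ?_ (le_rhoK ⟨hℓ, ?_⟩)
  · rw [rho_dmax_sub_mul hr]
    linarith [Int.emod_nonneg g (show r + 1 ≠ 0 by omega)]
  · rw [sub_dmax_add_sub_one hr]
    exact le_min hℓr hℓq

lemma mem_upperBounds_kappa_dmax (hr : 0 ≤ r) (hg : 0 ≤ g) :
    g / (r + 1) + r ∈ upperBounds {k : ℤ | 1 ≤ k ∧ 0 ≤ rhoK g r (dmax g r) k} :=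
  fun _ hk => not_lt.1 fun h => (rhoK_dmax_neg hr hg h).not_ge hk.2

lemma kappa_dmax_le (hr : 1 ≤ r) (hg : r + 1 ≤ g) :
    kappa g r (dmax g r) ≤ g / (r + 1) + r := by
  have hq : 1 ≤ g / (r + 1) := (Int.le_ediv_iff_mul_le (by omega)).2 (by omega)
  exact csSup_le ⟨g / (r + 1), hq, rhoK_dmax_nonneg (by omega) zero_le_one hr hq (by omega)⟩
    (mem_upperBounds_kappa_dmax (by omega) (by omega))

lemma le_kappa_dmax (hr : 0 ≤ r) (hg : 0 ≤ g) {k ℓ : ℤ} (hk : 1 ≤ k) (hℓ : 0 ≤ ℓ) (hℓr : ℓ ≤ r)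
    (hℓq : ℓ ≤ g / (r + 1)) (hkℓ : r + 1 ≤ ℓ * (g / (r + 1) + r + 2 - k - ℓ)) :
    k ≤ kappa g r (dmax g r) :=
  le_csSup ⟨_, mem_upperBounds_kappa_dmax hr hg⟩ ⟨hk, rhoK_dmax_nonneg hr hℓ hℓr hℓq hkℓ⟩

end dmax

lemma add_mul_mul_add_le_mul {g R t c : ℤ} (hR : 0 ≤ R) (ht : 1 ≤ t)
    (hsmall : (c + 1) * R * (R + 1) ≤ g) (hlarge : (R + t - 1) * (R + t) ≤ g) :
    (t + c) * R * (R + t) ≤ g * t := by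
  rcases le_or_gt t (c * R) with htc | htc
  · -- `g * t - (t + c) * R * (R + t) ≥ R * (t - 1) * (c * R - t)`
    nlinarith [mul_le_mul_of_nonneg_right hsmall (show 0 ≤ t by omega),
      mul_nonneg (mul_nonneg hR (show 0 ≤ t - 1 by omega)) (show 0 ≤ c * R - t by omega)]
  · have h : (t + c) * R ≤ (R + t - 1) * t := by nlinarith
    calc (t + c) * R * (R + t) ≤ (R + t - 1) * t * (R + t) :=
          mul_le_mul_of_nonneg_right h (by omega)
      _ = (R + t - 1) * (R + t) * t := by ring
      _ ≤ g * t := mul_le_mul_of_nonneg_right hlarge (by omega)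

lemma ediv_add_add_le_ediv {g R t c : ℤ} (hR : 0 < R) (ht : 0 ≤ t)
    (h : (t + c) * R * (R + t) ≤ g * t) : g / (R + t) + t + c ≤ g / R := by
  have hS : 0 < R + t := by omega
  rw [Int.le_ediv_iff_mul_le hR]
  refine le_of_mul_le_mul_right ?_ hS
  nlinarith [mul_le_mul_of_nonneg_right (Int.ediv_mul_le g hS.ne') hR.le]

lemma mul_mul_le_rpow_of_le_sqrt_add_one {R b : ℝ} (hR : 3 ≤ R) (hb : b ≤ √R + 1) :
    (2 * b + 1) * R * (R + 1) ≤ 4 * R ^ ((5 : ℝ) / 2) + R ^ 2 + 2 * R ^ ((3 : ℝ) / 2) := by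
  have hR0 : 0 < R := by linarith
  have h52 : R ^ ((5 : ℝ) / 2) = R ^ 2 * √R := by
    rw [Real.sqrt_eq_rpow, ← Real.rpow_natCast, ← Real.rpow_add hR0]
    norm_num
  have h32 : R ^ ((3 : ℝ) / 2) = R * √R := by
    rw [Real.sqrt_eq_rpow, ← Real.rpow_one_add' hR0.le (by norm_num)]
    norm_num
  have hx : √R ^ 2 = R := Real.sq_sqrt hR0.le
  have hx17 : 1.7 ≤ √R := by nlinarith [Real.sqrt_nonneg R]
  rw [h52, h32]
  nlinarith [mul_le_mul_of_nonneg_right hb (show 0 ≤ R * (R + 1) by positivity),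
    mul_nonneg (mul_nonneg hR0.le hR0.le) (sub_nonneg.2 hx17)]

lemma exists_le_mul_self_of_rpow_le {r g : ℤ} (hr : 2 ≤ r)
    (hg : 4 * ((r : ℝ) + 1) ^ ((5 : ℝ) / 2) + ((r : ℝ) + 1) ^ 2 +
        2 * ((r : ℝ) + 1) ^ ((3 : ℝ) / 2) ≤ (g : ℝ)) :
    ∃ b : ℤ, 0 ≤ b ∧ b ≤ r ∧ r + 1 ≤ b * b ∧ (2 * b + 1) * (r + 1) * (r + 2) ≤ g := by
  have hr' : (2 : ℝ) ≤ r := by exact_mod_cast hr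
  have hx : √((r : ℝ) + 1) ^ 2 = r + 1 := Real.sq_sqrt (by linarith)
  refine ⟨⌈√((r : ℝ) + 1)⌉, (Int.ceil_pos.2 (Real.sqrt_pos.2 (by linarith))).le,
    Int.ceil_le.2 ?_, ?_, ?_⟩
  · rw [Real.sqrt_le_left (by linarith)]
    nlinarith
  · have h := Int.le_ceil √((r : ℝ) + 1)
    have : ((r + 1 : ℤ) : ℝ) ≤ ((⌈√((r : ℝ) + 1)⌉ * ⌈√((r : ℝ) + 1)⌉ : ℤ) : ℝ) := by
      push_cast
      nlinarith [Real.sqrt_nonneg ((r : ℝ) + 1)]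
    exact_mod_cast this
  · have h := mul_mul_le_rpow_of_le_sqrt_add_one (R := (r : ℝ) + 1) (by linarith)
      (Int.ceil_lt_add_one _).le
    have : (((2 * ⌈√((r : ℝ) + 1)⌉ + 1) * (r + 1) * (r + 2) : ℤ) : ℝ) ≤ g := by
      push_cast
      linarith
    exact_mod_cast this

theorem stmt12 (r g : ℤ) (hr : 2 ≤ r)
    (hg : 4 * ((r : ℝ) + 1) ^ ((5 : ℝ) / 2) + ((r : ℝ) + 1) ^ 2 +
        2 * ((r : ℝ) + 1) ^ ((3 : ℝ) / 2) ≤ (g : ℝ)) :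
    ∀ s : ℤ, r < s → s * (s + 1) ≤ g →
      kappa g s (dmax g s) < kappa g r (dmax g r) := by
  intro s hs hsg
  obtain ⟨b, hb, hbr, hbb, hbg⟩ := exists_le_mul_self_of_rpow_le hr hg
  have hq : r + 2 ≤ g / (r + 1) := (Int.le_ediv_iff_mul_le (by omega)).2 (by nlinarith)
  have hgap : g / (s + 1) + (s - r) + 2 * b ≤ g / (r + 1) := by
    have h := ediv_add_add_le_ediv (by omega) (by omega) <|
      add_mul_mul_add_le_mul (g := g) (R := r + 1) (t := s - r) (c := 2 * b) (by omega)
        (by omega) (by linarith) (by convert hsg using 1; ring)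
    rwa [show r + 1 + (s - r) = s + 1 by ring] at h
  calc kappa g s (dmax g s) ≤ g / (s + 1) + s := kappa_dmax_le (by omega) (by nlinarith)
    _ < g / (r + 1) + r + 2 - 2 * b := by omega
    _ ≤ kappa g r (dmax g r) :=
      le_kappa_dmax (by omega) (by nlinarith) (by omega) hb hbr (by omega)
        (by convert hbb using 1; ring)
end
end

section
/- Let g, s, e be positive integers with e ≤ g − 1 and ρ(g,s,e) = −1. Then κ(g,s,e) = g − 1 − γ(s,e) = g − 1 − (e − 2s). -/
noncomputable section

/-! When `ρ(g,s,e) = -1`, lowering `s` by `ℓ` raises `ρ` by `ℓ(g - e + 2s + 1 - ℓ)`, so the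
`ℓ`-th term of `ρ_k` is `-1 + ℓ(g - e + 2s + 1 - ℓ - k)`. This is nonnegative for some `ℓ ≥ 1`
exactly when the term for `ℓ = 1` is, i.e. when `k ≤ g - e + 2s - 1`; hence `κ = g - e + 2s - 1`. -/

theorem rho_sub (g r d ℓ : ℤ) :
    rho g (r - ℓ) d = rho g r d + ℓ * (g - d + 2 * r + 1 - ℓ) := by
  unfold rho; ring

theorem Int.zero_le_csSup_iff {S : Set ℤ} (hne : S.Nonempty) (hbdd : BddAbove S) :
    0 ≤ sSup S ↔ ∃ x ∈ S, 0 ≤ x :=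
  ⟨fun h => ⟨_, Int.csSup_mem hne hbdd, h⟩, fun ⟨_, hx, h⟩ => h.trans (le_csSup hbdd hx)⟩

theorem zero_le_rhoK_iff {g r d k : ℤ} (h : 0 ≤ min r (g - d + r - 1)) :
    0 ≤ rhoK g r d k ↔
      ∃ ℓ ∈ Set.Icc 0 (min r (g - d + r - 1)), 0 ≤ rho g (r - ℓ) d - ℓ * k := by
  rw [rhoK, Int.zero_le_csSup_iff ((Set.nonempty_Icc.2 h).image _)
    ((Set.finite_Icc _ _).image _).bddAbove, Set.exists_mem_image]

theorem zero_le_rhoK_iff_of_rho_eq_neg_one {g r d k : ℤ} (hr : 1 ≤ r) (hd : d ≤ g - 1)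
    (hrho : rho g r d = -1) : 0 ≤ rhoK g r d k ↔ k ≤ g - d + 2 * r - 1 := by
  have hmin : min r (g - d + r - 1) = r := min_eq_left (by omega)
  rw [zero_le_rhoK_iff (by omega), hmin]
  simp only [rho_sub, hrho, Set.mem_Icc]
  constructor
  · rintro ⟨ℓ, ⟨hℓ0, -⟩, hℓ⟩
    -- the term is `-1 + ℓ * (g - d + 2r + 1 - ℓ - k)`, so both factors must be positive
    have hpos : 0 < ℓ * (g - d + 2 * r + 1 - ℓ - k) := by linarith
    have hℓ : 0 < ℓ := lt_of_le_of_ne hℓ0 (by rintro rfl; simp at hpos)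
    have := pos_of_mul_pos_right hpos hℓ.le
    omega
  · intro hk
    exact ⟨1, ⟨zero_le_one, hr⟩, by linarith⟩

theorem stmt15_general (g s e : ℤ) (hs : 1 ≤ s)
    (heg : e ≤ g - 1) (hrho : rho g s e = -1) :
    kappa g s e = g - 1 - (e - 2 * s) := by
  have hset : {k : ℤ | 1 ≤ k ∧ 0 ≤ rhoK g s e k} = Set.Icc 1 (g - e + 2 * s - 1) := by
    ext k
    simp only [Set.mem_ofPred_eq, Set.mem_Icc, zero_le_rhoK_iff_of_rho_eq_neg_one hs heg hrho]
  rw [kappa, hset, csSup_Icc (by omega)]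
  ring

theorem stmt15 (g s e : ℤ) (hg : 1 ≤ g) (hs : 1 ≤ s) (he : 1 ≤ e)
    (heg : e ≤ g - 1) (hrho : rho g s e = -1) :
    kappa g s e = g - 1 - (e - 2 * s) :=
  stmt15_general g s e hs heg hrho
end
end
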